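/- arXiv:2407.01887 — 3 statements merged into one kernel-verified Lean document; each statement's English description precedes it below -/
import Mathlib

section
/- Let N be a binomial random variable with parameters n ∈ ℕ and q ∈ [0,1], and let μ = nq be its mean. If μ ≥ 8, then for every real c ≥ 0, E[min(N, c)] ≥ (1/2)·min(μ/2, c). -/
open Finset

lemma cast_mul_pred (k : ℕ) : ((k * (k - 1) : ℕ) : ℝ) = (k : ℝ)^2 - k := by
  cases k with
  | zero => simp
  | succ m => push_cast [Nat.succ_sub_one]; ring

lemma bern_moments (n : ℕ) (q : ℝ) :
    (∑ k ∈ range (n + 1), (n.choose k : ℝ) * q ^ k * (1 - q) ^ (n - k)) = 1 ∧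
    (∑ k ∈ range (n + 1), (k : ℝ) * ((n.choose k : ℝ) * q ^ k * (1 - q) ^ (n - k))) = n * q ∧
    (∑ k ∈ range (n + 1), ((k * (k - 1) : ℕ) : ℝ) * ((n.choose k : ℝ) * q ^ k * (1 - q) ^ (n - k)))
      = ((n * (n - 1) : ℕ) : ℝ) * q ^ 2 := by
  have hev : ∀ k, Polynomial.eval q (bernsteinPolynomial ℝ n k)
      = (n.choose k : ℝ) * q ^ k * (1 - q) ^ (n - k) := by
    intro k; simp [bernsteinPolynomial]
  refine ⟨?_, ?_, ?_⟩
  · have := congrArg (Polynomial.eval q) (bernsteinPolynomial.sum ℝ n)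
    simpa [Polynomial.eval_finset_sum, hev] using this
  · have := congrArg (Polynomial.eval q) (bernsteinPolynomial.sum_smul ℝ n)
    simpa [Polynomial.eval_finset_sum, hev, nsmul_eq_mul, mul_comm, mul_assoc, mul_left_comm]
      using this
  · have := congrArg (Polynomial.eval q) (bernsteinPolynomial.sum_mul_smul ℝ n)
    simpa [Polynomial.eval_finset_sum, hev, nsmul_eq_mul, mul_comm, mul_assoc, mul_left_comm]
      using this

/-- **Truncated-expectation lower bound for a binomial random variable.**
Let `N ~ Binomial(n, q)` (so that `P(N = k) = C(n,k) q^k (1-q)^(n-k)` for `k = 0, …, n`),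
with mean `μ = n q`.  If `μ ≥ 8`, then for every real `c ≥ 0`,
`E[min(N, c)] ≥ (1/2) · min(μ/2, c)`, where the expectation is written out explicitly as
`∑_{k=0}^{n} C(n,k) q^k (1-q)^(n-k) · min(k, c)`. -/
theorem binomial_truncated_expectation_lower_bound
    (n : ℕ) (q : ℝ) (hq0 : 0 ≤ q) (hq1 : q ≤ 1) (c : ℝ) (hc : 0 ≤ c)
    (hmean : 8 ≤ (n : ℝ) * q) :
    (1 / 2) * min ((n : ℝ) * q / 2) c ≤
      ∑ k ∈ Finset.range (n + 1),
        (n.choose k : ℝ) * q ^ k * (1 - q) ^ (n - k) * min (k : ℝ) c := by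
  set p : ℕ → ℝ := fun k => (n.choose k : ℝ) * q ^ k * (1 - q) ^ (n - k) with hp
  have hpnn : ∀ k, 0 ≤ p k := fun k =>
    mul_nonneg (mul_nonneg (Nat.cast_nonneg _) (pow_nonneg hq0 _)) (pow_nonneg (by linarith) _)
  obtain ⟨h0, h1, h2⟩ := bern_moments n q
  set μ : ℝ := (n : ℝ) * q with hμ
  have hμ8 : 8 ≤ μ := hmean
  -- variance bound
  have h2' : (∑ k ∈ range (n + 1), ((k : ℝ)^2 - k) * p k) = ((n:ℝ)^2 - n) * q ^ 2 := by
    rw [← cast_mul_pred n, ← h2]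
    exact Finset.sum_congr rfl fun k _ => by rw [cast_mul_pred]
  have hV : (∑ k ∈ range (n + 1), ((k : ℝ) - μ)^2 * p k) = (n:ℝ) * q * (1 - q) := by
    have expand : ∀ k ∈ range (n+1), ((k : ℝ) - μ)^2 * p k
        = ((k:ℝ)^2 - k) * p k + (1 - 2*μ) * ((k:ℝ) * p k) + μ^2 * p k := fun k _ => by ring
    rw [Finset.sum_congr rfl expand, Finset.sum_add_distrib, Finset.sum_add_distrib,
      ← Finset.mul_sum, ← Finset.mul_sum, h2', h1, h0]
    ring
  have hVle : (∑ k ∈ range (n + 1), ((k : ℝ) - μ)^2 * p k) ≤ μ := by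
    rw [hV]; nlinarith
  set t : ℝ := μ / 2 with ht
  have ht4 : 4 ≤ t := by simp [ht]; linarith
  -- Chebyshev
  set A : Finset ℕ := (range (n+1)).filter (fun k => (k:ℝ) < t) with hA
  have hAsum : (∑ k ∈ A, p k) ≤ 1 / 2 := by
    have hkey : t^2 * (∑ k ∈ A, p k) ≤ ∑ k ∈ A, ((k : ℝ) - μ)^2 * p k := by
      rw [Finset.mul_sum]
      refine Finset.sum_le_sum fun k hk => ?_
      have hk' : (k : ℝ) < t := (Finset.mem_filter.mp hk).2
      have : t ≤ μ - k := by simp [ht] at hk' ⊢; linarith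
      have h1 : t^2 ≤ ((k:ℝ) - μ)^2 := by nlinarith
      exact mul_le_mul_of_nonneg_right h1 (hpnn k)
    have hsub : (∑ k ∈ A, ((k : ℝ) - μ)^2 * p k) ≤ ∑ k ∈ range (n+1), ((k : ℝ) - μ)^2 * p k :=
      Finset.sum_le_sum_of_subset_of_nonneg (Finset.filter_subset _ _)
        (fun k _ _ => mul_nonneg (sq_nonneg _) (hpnn k))
    have hle : t^2 * (∑ k ∈ A, p k) ≤ μ := le_trans hkey (le_trans hsub hVle)
    have h2μ : 2 * μ ≤ t^2 := by rw [ht]; nlinarith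
    nlinarith [Finset.sum_nonneg fun k (_ : k ∈ A) => hpnn k, hle, h2μ]
  -- complement mass
  have hB : 1 / 2 ≤ ∑ k ∈ (range (n+1)).filter (fun k : ℕ => ¬ (k:ℝ) < t), p k := by
    have hsplit := Finset.sum_filter_add_sum_filter_not (range (n+1)) (fun k => (k:ℝ) < t) p
    rw [h0] at hsplit
    linarith
  -- conclude
  have hmin : ∀ k ∈ (range (n+1)).filter (fun k : ℕ => ¬ (k:ℝ) < t),
      min t c * p k ≤ p k * min (k:ℝ) c := by
    intro k hk
    have hk' : t ≤ (k : ℝ) := le_of_not_gt (Finset.mem_filter.mp hk).2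
    rw [mul_comm]
    exact mul_le_mul_of_nonneg_left (le_min (min_le_left t c |>.trans hk') (min_le_right t c)) (hpnn k)
  calc (1/2) * min t c ≤ (∑ k ∈ (range (n+1)).filter (fun k : ℕ => ¬ (k:ℝ) < t), p k) * min t c := by
        have hmtc : 0 ≤ min t c := le_min (by linarith) hc
        exact mul_le_mul_of_nonneg_right hB hmtc
    _ = ∑ k ∈ (range (n+1)).filter (fun k : ℕ => ¬ (k:ℝ) < t), min t c * p k := by
        rw [Finset.sum_mul]; exact Finset.sum_congr rfl fun k _ => mul_comm _ _
    _ ≤ ∑ k ∈ (range (n+1)).filter (fun k : ℕ => ¬ (k:ℝ) < t), p k * min (k:ℝ) c :=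
        Finset.sum_le_sum hmin
    _ ≤ ∑ k ∈ range (n+1), p k * min (k:ℝ) c :=
        Finset.sum_le_sum_of_subset_of_nonneg (Finset.filter_subset _ _)
          (fun k _ _ => mul_nonneg (hpnn k) (le_min (Nat.cast_nonneg _) hc))
    _ = _ := rfl
end

section
/- Let ε ∈ (0,1/2), δ ∈ (0,1], and let n be a positive integer with n ≥ (4/ε²)·log(1/δ). Let S be a binomial random variable with parameters n and success probability 1/2 + ε. Then P( S/n ≤ 1/2 + √(log(1/δ)/n) ) ≤ δ² ≤ δ. Consequently, after n independent comparisons between two arms b_i and b_j with P(b_i ≻ b_j) = 1/2 + ε, with probability at least 1 − δ the empirical win frequency of b_i exceeds 1/2 by more than the confidence radius c_n = √(log(1/δ)/n), so b_i is correctly identified as the winner. -/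
/-!
Chernoff's method: on the event `S ≤ a n` the weight `exp (t (a n - S))` is at least one, so
for `t ≥ 0` the lower tail of `Bin(n, p)` is at most `exp (t a n) (p e^{-t} + 1 - p)^n`.
Hoeffding's lemma bounds the Bernoulli factor by `exp (-p t + t²/8)`, and `t = 4 (p - a)`
yields `exp (-2 n (p - a)²)`. With `a = 1/2 + c_n`, the sample-size condition gives
`c_n ≤ ε/2`, hence `n (ε - c_n)² ≥ log (1/δ)` and the bound `δ²`; the second claim is the
complementary event.
-/

open Real Finset MeasureTheory ProbabilityTheory

lemma bernoulli_mgf_le (p t : ℝ) (hp₀ : 0 ≤ p) (hp₁ : p ≤ 1) :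
    p * exp t + (1 - p) ≤ exp (p * t + t ^ 2 / 8) := by
  have hoeffding := (hasSubgaussianMGF_of_mem_Icc (μ := Ber(true, false, ⟨p, hp₀, hp₁⟩))
    (X := fun b => if b then (1 : ℝ) else 0) (a := 0) (b := 1)
    (by fun_prop) (ae_of_all _ fun b => by cases b <;> simp)).mgf_le t
  simp only [mgf, integral_bernoulliMeasure, ↓reduceIte, Bool.false_eq_true, smul_eq_mul,
    mul_one, mul_zero, add_zero, zero_sub, mul_neg, sub_zero, nnnorm_one, one_div, inv_pow,
    NNReal.coe_inv, NNReal.coe_pow, NNReal.coe_ofNat] at hoeffding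
  calc p * exp t + (1 - p)
      = (p * exp (t * (1 - p)) + (1 - p) * exp (-(t * p))) * exp (p * t) := by
        rw [add_mul, mul_assoc, mul_assoc, ← exp_add, ← exp_add,
          show t * (1 - p) + p * t = t by ring, show -(t * p) + p * t = 0 by ring, exp_zero,
          mul_one]
    _ ≤ exp (t ^ 2 / 8) * exp (p * t) := by
        gcongr
        exact hoeffding.trans_eq (by ring_nf)
    _ = exp (p * t + t ^ 2 / 8) := by rw [← exp_add, add_comm]

lemma sum_choose_mul_pow_mul_exp (p q t : ℝ) (n : ℕ) :
    ∑ k ∈ range (n + 1), (n.choose k : ℝ) * p ^ k * q ^ (n - k) * exp (t * k) =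
      (p * exp t + q) ^ n := by
  rw [add_pow]
  refine sum_congr rfl fun k _ => ?_
  rw [mul_pow, mul_comm t, exp_nat_mul]
  ring

lemma sum_choose_mul_pow_eq_one {p q : ℝ} (hpq : p + q = 1) (n : ℕ) :
    ∑ k ∈ range (n + 1), (n.choose k : ℝ) * p ^ k * q ^ (n - k) = 1 := by
  simpa [hpq] using sum_choose_mul_pow_mul_exp p q 0 n

lemma ite_le_mul_exp {x a t w : ℝ} (ht : 0 ≤ t) (hw : 0 ≤ w) :
    (if x ≤ a then w else 0) ≤ w * exp (t * (a - x)) := by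
  split_ifs with hx
  · exact le_mul_of_one_le_right hw (one_le_exp (mul_nonneg ht (sub_nonneg.mpr hx)))
  · positivity

lemma binomial_lower_tail_le {p q : ℝ} (hp : 0 ≤ p) (hq : 0 ≤ q) (hpq : p + q = 1)
    (n : ℕ) {a : ℝ} (ha : a ≤ p) :
    ∑ k ∈ range (n + 1), (if (k : ℝ) ≤ a * n then (n.choose k : ℝ) * p ^ k * q ^ (n - k) else 0)
      ≤ exp (-(2 * n * (p - a) ^ 2)) := by
  obtain rfl : q = 1 - p := eq_sub_of_add_eq' hpq
  set t := 4 * (p - a)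
  calc _ ≤ ∑ k ∈ range (n + 1),
          (n.choose k : ℝ) * p ^ k * (1 - p) ^ (n - k) * exp (t * (a * n - k)) := by
        gcongr with k
        exact ite_le_mul_exp (by linarith) (by positivity)
    _ = exp (t * (a * n)) *
          ∑ k ∈ range (n + 1), (n.choose k : ℝ) * p ^ k * (1 - p) ^ (n - k) * exp (-t * k) := by
        rw [mul_sum]
        refine sum_congr rfl fun k _ => ?_
        rw [show t * (a * n - k) = t * (a * n) + -t * k by ring, exp_add]
        ring
    _ = exp (t * (a * n)) * (p * exp (-t) + (1 - p)) ^ n := by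
        rw [sum_choose_mul_pow_mul_exp]
    _ ≤ exp (t * (a * n)) * exp (p * -t + (-t) ^ 2 / 8) ^ n := by
        gcongr
        exact bernoulli_mgf_le p (-t) hp (by linarith)
    _ = exp (-(2 * n * (p - a) ^ 2)) := by
        rw [← exp_nat_mul, ← exp_add]
        simp only [t]
        ring_nf

lemma sqrt_div_le_half {L ε N : ℝ} (hN : 0 < N) (hε : 0 < ε) (h : 4 / ε ^ 2 * L ≤ N) :
    √(L / N) ≤ ε / 2 := by
  rw [div_mul_eq_mul_div, div_le_iff₀ (by positivity)] at h
  rw [sqrt_le_left (by positivity), div_le_iff₀ hN]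
  linarith

lemma le_mul_sq_sub_sqrt_div {L ε N : ℝ} (hN : 0 < N) (hε : 0 < ε) (h : 4 / ε ^ 2 * L ≤ N) :
    L ≤ N * (ε - √(L / N)) ^ 2 := by
  have hc := sqrt_div_le_half hN hε h
  rw [div_mul_eq_mul_div, div_le_iff₀ (by positivity)] at h
  calc L ≤ N * (ε / 2) ^ 2 := by linarith
    _ ≤ N * (ε - √(L / N)) ^ 2 := by gcongr; linarith

lemma sum_ite_lt_eq_sub {ι α M : Type*} [LinearOrder α] [AddCommGroup M] (s : Finset ι)
    (f : ι → M) (g : ι → α) (a : α) :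
    ∑ i ∈ s, (if a < g i then f i else 0) = ∑ i ∈ s, f i - ∑ i ∈ s, (if g i ≤ a then f i else 0) := by
  rw [eq_sub_iff_add_eq, ← sum_add_distrib]
  refine sum_congr rfl fun i _ => ?_
  by_cases h : a < g i
  · simp [h, not_le.mpr h]
  · simp [h, not_lt.mp h]

/-- **Fixed-horizon winner identification (Hoeffding bound).**
Let `ε ∈ (0, 1/2)`, `δ ∈ (0, 1]`, and let `n ≥ (4/ε²)·log(1/δ)` be a positive integer.
Let `S ~ Binomial(n, 1/2 + ε)` be the number of duels won by arm `b_i` against `b_j` in `n`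
independent comparisons, where `b_i` wins each duel with probability `1/2 + ε`.  Then
`P(S/n ≤ 1/2 + √(log(1/δ)/n)) ≤ δ² ≤ δ`, and consequently with probability at least `1 − δ`
the empirical win frequency `S/n` of `b_i` exceeds `1/2` by more than the confidence radius
`c_n = √(log(1/δ)/n)`, so `b_i` is correctly identified as the winner. -/
theorem winner_identification_fixed_horizon
    (ε δ : ℝ) (hε : ε ∈ Set.Ioo (0 : ℝ) (1 / 2)) (hδ : δ ∈ Set.Ioc (0 : ℝ) 1)
    (n : ℕ) (hn : 0 < n) (hn2 : (4 / ε ^ 2) * Real.log (1 / δ) ≤ (n : ℝ)) :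
    ((∑ k ∈ Finset.range (n + 1),
        if (k : ℝ) / n ≤ 1 / 2 + Real.sqrt (Real.log (1 / δ) / n) then
          (n.choose k : ℝ) * (1 / 2 + ε) ^ k * (1 / 2 - ε) ^ (n - k)
        else 0) ≤ δ ^ 2 ∧ δ ^ 2 ≤ δ) ∧
      1 - δ ≤
        ∑ k ∈ Finset.range (n + 1),
          if 1 / 2 + Real.sqrt (Real.log (1 / δ) / n) < (k : ℝ) / n then
            (n.choose k : ℝ) * (1 / 2 + ε) ^ k * (1 / 2 - ε) ^ (n - k)
          else 0 := by
  obtain ⟨hε₀, hε₁⟩ := hε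
  obtain ⟨hδ₀, hδ₁⟩ := hδ
  have hn' : (0 : ℝ) < n := Nat.cast_pos.mpr hn
  have hpq : 1 / 2 + ε + (1 / 2 - ε) = 1 := by ring
  set c := √(log (1 / δ) / n)
  have hc : c ≤ ε / 2 := sqrt_div_le_half hn' hε₀ hn2
  have hlower : (∑ k ∈ range (n + 1), if (k : ℝ) / n ≤ 1 / 2 + c then
      (n.choose k : ℝ) * (1 / 2 + ε) ^ k * (1 / 2 - ε) ^ (n - k) else 0) ≤ δ ^ 2 := by
    simp_rw [div_le_iff₀ hn']
    calc _ ≤ exp (-(2 * n * (1 / 2 + ε - (1 / 2 + c)) ^ 2)) :=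
          binomial_lower_tail_le (by linarith) (by linarith) hpq n (by linarith)
      _ = exp (-(2 * (n * (ε - c) ^ 2))) := by ring_nf
      _ ≤ exp (-(2 * log (1 / δ))) := by gcongr; exact le_mul_sq_sub_sqrt_div hn' hε₀ hn2
      _ = δ ^ 2 := by rw [one_div, log_inv, mul_neg, neg_neg, two_mul, exp_add, exp_log hδ₀, sq]
  have hδ_sq : δ ^ 2 ≤ δ := by nlinarith
  refine ⟨⟨hlower, hδ_sq⟩, ?_⟩
  rw [sum_ite_lt_eq_sub, sum_choose_mul_pow_eq_one hpq]
  linarith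
end

section
/- Let ε ∈ (0,1/2) and δ ∈ (0,1/2]. Let X_1, X_2, … be i.i.d. Bernoulli random variables with mean 1/2 + ε (the indicator that arm b_i wins the t-th duel against arm b_j). Let P̂_n = (1/n)·Σ_{t=1}^n X_t, c_n = √(log(1/δ)/n), n_max = ⌈(4/ε²)·log(1/δ)⌉, and let τ = min{ n ≥ 1 : |P̂_n − 1/2| > c_n } be the first time the confidence interval excludes 1/2. Then with probability at least 1 − (n_max + 1)·δ², the procedure stops within n_max comparisons and identifies the correct winner: P( τ ≤ n_max and P̂_τ > 1/2 ) ≥ 1 − (n_max + 1)·δ². -/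
/-!
The centred outcomes `p - X t` take values in an interval of length one, so Hoeffding's
inequality gives `P(P̂_n ≤ p - c_n) ≤ exp (-2 n c_n²) = δ²` for every `n`. Outside the union of
these `n_max` bad events, `P̂_n > 1/2 + ε - c_n > 1/2 - c_n` for all `n ≤ n_max`, so the
confidence interval never lies entirely below `1/2`; and since `c_{n_max} ≤ ε/2`, it lies
entirely above `1/2` at the latest at `n = n_max`.
-/

open MeasureTheory ProbabilityTheory
open scoped NNReal

section Bernoulli

variable {Ω : Type*} [MeasurableSpace Ω] {μ : Measure Ω} {B : Ω → Bool} {p : ℝ≥0} {hp : p ≤ 1}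

lemma integral_ite_of_map_eq_bernoulli (hB : Measurable B)
    (hlaw : μ.map B = (PMF.bernoulli p hp).toMeasure) :
    μ[fun ω ↦ if B ω then (1 : ℝ) else 0] = (p : ℝ) := by
  have hf : Measurable fun b : Bool ↦ if b then (1 : ℝ) else 0 := Measurable.of_discrete
  rw [← integral_map (f := fun b : Bool ↦ if b then (1 : ℝ) else 0) hB.aemeasurable
    hf.aestronglyMeasurable, hlaw]
  simpa [Bool.cond_eq_ite] using PMF.bernoulli_expectation hp

lemma hasSubgaussianMGF_of_map_eq_bernoulli [IsProbabilityMeasure μ] (hB : Measurable B)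
    (hlaw : μ.map B = (PMF.bernoulli p hp).toMeasure) :
    HasSubgaussianMGF (fun ω ↦ p - if B ω then (1 : ℝ) else 0) (1 / 4) μ := by
  have hY : AEMeasurable (fun ω ↦ if B ω then (1 : ℝ) else 0) μ :=
    ((Measurable.of_discrete (f := fun b : Bool ↦ if b then (1 : ℝ) else 0)).comp hB).aemeasurable
  have h := (hasSubgaussianMGF_of_mem_Icc hY (a := 0) (b := 1)
    (ae_of_all _ fun ω ↦ by split <;> simp)).neg
  rw [integral_ite_of_map_eq_bernoulli hB hlaw] at h
  convert h using 1
  · ext ω; simp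
  · ext; norm_num

end Bernoulli

noncomputable def empiricalMean {Ω : Type*} (X : ℕ → Ω → Bool) (n : ℕ) (ω : Ω) : ℝ :=
  (∑ t ∈ Finset.range n, if X t ω then (1 : ℝ) else 0) / n

lemma measureReal_empiricalMean_le_sub_le {Ω : Type*} [MeasurableSpace Ω] {μ : Measure Ω}
    [IsProbabilityMeasure μ] {p : ℝ≥0} {hp : p ≤ 1} {X : ℕ → Ω → Bool}
    (hmeas : ∀ t, Measurable (X t)) (hlaw : ∀ t, μ.map (X t) = (PMF.bernoulli p hp).toMeasure)
    (hindep : iIndepFun X μ) {n : ℕ} (hn : 0 < n) {r : ℝ} (hr : 0 ≤ r) :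
    μ.real {ω | empiricalMean X n ω ≤ p - r} ≤ Real.exp (-2 * n * r ^ 2) := by
  have hn' : (0 : ℝ) < n := Nat.cast_pos.mpr hn
  have hcentered : iIndepFun (fun t ω ↦ (p : ℝ) - if X t ω then 1 else 0) μ :=
    hindep.comp (fun _ b ↦ (p : ℝ) - if b then 1 else 0) fun _ ↦ Measurable.of_discrete
  have hevent : {ω | empiricalMean X n ω ≤ p - r} =
      {ω | n * r ≤ ∑ t ∈ Finset.range n, ((p : ℝ) - if X t ω then 1 else 0)} := by
    ext ω
    simp only [Set.mem_ofPred_eq, empiricalMean, Finset.sum_sub_distrib, Finset.sum_const,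
      Finset.card_range, nsmul_eq_mul, div_le_iff₀ hn']
    constructor <;> intro h <;> linarith
  rw [hevent]
  refine (HasSubgaussianMGF.measure_sum_range_ge_le_of_iIndepFun hcentered
    (fun t _ ↦ hasSubgaussianMGF_of_map_eq_bernoulli (hmeas t) (hlaw t))
    (by positivity)).trans_eq ?_
  congr 1
  push_cast
  field_simp
  ring

lemma measureReal_empiricalMean_le_sub_sqrt_log_le {Ω : Type*} [MeasurableSpace Ω]
    {μ : Measure Ω} [IsProbabilityMeasure μ] {p : ℝ≥0} {hp : p ≤ 1} {X : ℕ → Ω → Bool}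
    (hmeas : ∀ t, Measurable (X t)) (hlaw : ∀ t, μ.map (X t) = (PMF.bernoulli p hp).toMeasure)
    (hindep : iIndepFun X μ) {n : ℕ} (hn : 0 < n) {δ : ℝ} (hδ0 : 0 < δ) (hδ1 : δ ≤ 1) :
    μ.real {ω | empiricalMean X n ω ≤ p - Real.sqrt (Real.log (1 / δ) / n)} ≤ δ ^ 2 := by
  have hL : 0 ≤ Real.log (1 / δ) := Real.log_nonneg (one_le_one_div hδ0 hδ1)
  refine (measureReal_empiricalMean_le_sub_le hmeas hlaw hindep hn
    (Real.sqrt_nonneg _)).trans_eq ?_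
  have hexponent : -2 * n * (Real.log (1 / δ) / n) = Real.log δ * 2 := by
    simp only [one_div, Real.log_inv]
    field_simp
  rw [Real.sq_sqrt (by positivity), hexponent, Real.exp_mul, Real.exp_log hδ0]
  norm_cast

lemma exists_first_exit_above {g c : ℕ → ℝ} {a : ℝ} {N : ℕ}
    (hlow : ∀ n, 1 ≤ n → n ≤ N → a - c n < g n) (hN : 1 ≤ N) (hexit : a + c N < g N) :
    ∃ n, 1 ≤ n ∧ n ≤ N ∧ (∀ m, 1 ≤ m → m < n → |g m - a| ≤ c m) ∧
      c n < |g n - a| ∧ a < g n := by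
  classical
  have hNexit : c N < |g N - a| := (lt_sub_iff_add_lt'.mpr hexit).trans_le (le_abs_self _)
  have hex : ∃ n, 1 ≤ n ∧ c n < |g n - a| := ⟨N, hN, hNexit⟩
  obtain ⟨hn, hcross⟩ := Nat.find_spec hex
  have hnN : Nat.find hex ≤ N := Nat.find_min' hex ⟨hN, hNexit⟩
  refine ⟨Nat.find hex, hn, hnN, fun m hm hlt ↦ not_lt.mp fun hc ↦ Nat.find_min hex hlt ⟨hm, hc⟩,
    hcross, ?_⟩
  have hbelow := hlow _ hn hnN
  rcases abs_cases (g (Nat.find hex) - a) with ⟨h, _⟩ | ⟨h, _⟩ <;> rw [h] at hcross <;> linarith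

lemma one_sub_sum_measureReal_le_of_compl_subset {Ω ι : Type*} [MeasurableSpace Ω] {μ : Measure Ω}
    [IsProbabilityMeasure μ] {E : Set Ω} {B : ι → Set Ω} {s : Finset ι}
    (h : (⋃ i ∈ s, B i)ᶜ ⊆ E) :
    1 - ∑ i ∈ s, μ.real (B i) ≤ μ.real E := by
  have hcover : Set.univ ⊆ E ∪ ⋃ i ∈ s, B i := fun ω _ ↦ by
    by_cases hω : ω ∈ ⋃ i ∈ s, B i
    · exact Or.inr hω
    · exact Or.inl (h hω)
  have : 1 ≤ μ.real E + ∑ i ∈ s, μ.real (B i) := calc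
    1 = μ.real Set.univ := probReal_univ.symm
    _ ≤ μ.real (E ∪ ⋃ i ∈ s, B i) := measureReal_mono hcover
    _ ≤ μ.real E + μ.real (⋃ i ∈ s, B i) := measureReal_union_le _ _
    _ ≤ μ.real E + ∑ i ∈ s, μ.real (B i) := by
        gcongr; exact measureReal_biUnion_finset_le _ _
  linarith

lemma sqrt_div_le_half_of_four_div_sq_mul_le {L ε x : ℝ} (hε : 0 < ε) (hx : 0 < x)
    (h : 4 / ε ^ 2 * L ≤ x) : Real.sqrt (L / x) ≤ ε / 2 := by
  rw [Real.sqrt_le_left (by linarith), div_le_iff₀ hx]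
  rw [div_mul_eq_mul_div, div_le_iff₀ (by positivity)] at h
  linarith

/-- **Sequential (anytime) winner identification between two arms.**
Let `ε ∈ (0, 1/2)` and `δ ∈ (0, 1/2]`.  Let `X 0, X 1, …` be i.i.d. Bernoulli random variables
with mean `1/2 + ε` (`X t` is the indicator that arm `b_i` wins the `t`-th duel against `b_j`).
Let `P̂_n = (1/n)·∑_{t<n} X t`, `c_n = √(log(1/δ)/n)`, `n_max = ⌈(4/ε²)·log(1/δ)⌉`, and let
`τ = min{ n ≥ 1 : |P̂_n − 1/2| > c_n }` be the first time the confidence interval excludes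
`1/2`.  Then with probability at least `1 − (n_max + 1)·δ²` the procedure stops within `n_max`
comparisons and identifies the correct winner:
`P(τ ≤ n_max and P̂_τ > 1/2) ≥ 1 − (n_max + 1)·δ²`.
(The event below states that there is a first time `n ∈ [1, n_max]` at which the confidence
interval excludes `1/2`, and at that time `P̂_n > 1/2`.) -/
theorem sequential_winner_identification
    {Ω : Type*} [MeasurableSpace Ω] (μ : Measure Ω) [IsProbabilityMeasure μ]
    (ε δ : ℝ) (hε : ε ∈ Set.Ioo (0 : ℝ) (1 / 2)) (hδ : δ ∈ Set.Ioc (0 : ℝ) (1 / 2))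
    (X : ℕ → Ω → Bool)
    (hmeas : ∀ t, Measurable (X t))
    (hdist : ∀ t, μ.map (X t) =
      (PMF.bernoulli (Real.toNNReal (1 / 2 + ε))
        (by rw [Real.toNNReal_le_one]; linarith [hε.2])).toMeasure)
    (hindep : iIndepFun X μ) :
    1 - ((⌈(4 / ε ^ 2) * Real.log (1 / δ)⌉₊ : ℝ) + 1) * δ ^ 2 ≤
      (μ {ω : Ω | ∃ n : ℕ, 1 ≤ n ∧ n ≤ ⌈(4 / ε ^ 2) * Real.log (1 / δ)⌉₊ ∧
          (∀ m : ℕ, 1 ≤ m → m < n →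
            |(∑ t ∈ Finset.range m, if X t ω then (1 : ℝ) else 0) / m - 1 / 2| ≤
              Real.sqrt (Real.log (1 / δ) / m)) ∧
          Real.sqrt (Real.log (1 / δ) / n) <
            |(∑ t ∈ Finset.range n, if X t ω then (1 : ℝ) else 0) / n - 1 / 2| ∧
          1 / 2 < (∑ t ∈ Finset.range n, if X t ω then (1 : ℝ) else 0) / n}).toReal := by
  obtain ⟨hε0, hε1⟩ := hε
  obtain ⟨hδ0, hδ1⟩ := hδ
  set L := Real.log (1 / δ)
  set N := ⌈(4 / ε ^ 2) * L⌉₊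
  have hp : ((1 / 2 + ε).toNNReal : ℝ) = 1 / 2 + ε := Real.coe_toNNReal _ (by linarith)
  have hL : 0 < L := Real.log_pos (by rw [lt_div_iff₀ hδ0]; linarith)
  have hN : 1 ≤ N := Nat.one_le_iff_ne_zero.mpr (by positivity)
  have hradius : Real.sqrt (L / N) ≤ ε / 2 :=
    sqrt_div_le_half_of_four_div_sq_mul_le hε0 (by positivity) (Nat.le_ceil _)
  have hunion : ∑ n ∈ Finset.Icc 1 N,
      μ.real {ω | empiricalMean X n ω ≤ 1 / 2 + ε - Real.sqrt (L / n)} ≤ (N + 1) * δ ^ 2 := by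
    refine (Finset.sum_le_card_nsmul _ _ (δ ^ 2) fun n hn ↦ hp ▸
      measureReal_empiricalMean_le_sub_sqrt_log_le hmeas hdist hindep (Finset.mem_Icc.mp hn).1
        hδ0 (by linarith)).trans ?_
    rw [Nat.card_Icc, Nat.add_sub_cancel, nsmul_eq_mul]
    nlinarith [sq_nonneg δ]
  refine (sub_le_sub_left hunion 1).trans
    (one_sub_sum_measureReal_le_of_compl_subset fun ω hω ↦ ?_)
  simp only [Set.mem_compl_iff, Set.mem_iUnion, Finset.mem_Icc, Set.mem_ofPred_eq, not_exists,
    not_le] at hω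
  exact exists_first_exit_above (g := fun n ↦ empiricalMean X n ω)
    (fun n h1 h2 ↦ by linarith [hω n ⟨h1, h2⟩]) hN (by linarith [hω N ⟨hN, le_rfl⟩])
end
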